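/- arXiv:2212.08027 — 3 statements merged into one kernel-verified Lean document; each statement's English description precedes it below -/
import Mathlib

section
/- Let M₁ and M₂ be structures in languages L₁ and L₂ respectively, with the same domain M. Suppose that for all tuples ā, b̄ from M (of equal length), the quantifier-free type of ā equals that of b̄ in M₁ if and only if the quantifier-free type of ā equals that of b̄ in M₂. Then M₁ has the Embedding Ramsey Property if and only if M₂ has the Embedding Ramsey Property. -/
open FirstOrder Language CategoryTheory

/-- The quantifier-free type of a tuple: the set of quantifier-free formulas it satisfies. -/
def qftp (L : Language) (M : Type*) [L.Structure M] {α : Type*} (v : α → M) :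
    Set (L.Formula α) :=
  {φ | BoundedFormula.IsQF φ ∧ φ.Realize v}

/-- `s` is a copy (in `N`) of the tuple `v` (from `M`): it is the range of an enumeration
having the same quantifier-free type as `v`. -/
def IsCopyOf (L : Language) {M N : Type*} [L.Structure M] [L.Structure N] {α : Type*}
    (v : α → M) (s : Set N) : Prop :=
  ∃ e : α → N, Set.range e = s ∧ qftp L N e = qftp L M v

/-- The structural partition arrow for copies: every 2-colouring of subsets of `N` admits a
copy `s ⊆ C` of `b` such that all copies of `a` inside `s` get the same colour. -/
def CopyArrow (L : Language) {M N : Type*} [L.Structure M] [L.Structure N] {α β : Type*}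
    (a : α → M) (b : β → M) (C : Set N) : Prop :=
  ∀ χ : Set N → Fin 2, ∃ s : Set N, s ⊆ C ∧ IsCopyOf L b s ∧
    ∀ t u : Set N, t ⊆ s → u ⊆ s → IsCopyOf L a t → IsCopyOf L a u → χ t = χ u

/-- A structure has the Embedding Ramsey Property if for all finite subsets `A ⊆ B` of `M`
(given by enumerations) there is a finite subset `C` of `M` with `C → (B)^A_2`. -/
def StructERP (L : Language) (M : Type*) [L.Structure M] : Prop :=
  ∀ (n m : ℕ) (a : Fin n → M) (b : Fin m → M), Set.range a ⊆ Set.range b →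
    ∃ (k : ℕ) (c : Fin k → M), CopyArrow L a b (Set.range c)

section

variable {L₁ L₂ : Language} {M : Type*} [L₁.Structure M] [L₂.Structure M]

theorem isCopyOf_iff_of_qftp_eq_iff {α : Type*}
    (h : ∀ a b : α → M, qftp L₁ M a = qftp L₁ M b ↔ qftp L₂ M a = qftp L₂ M b)
    (v : α → M) (s : Set M) : IsCopyOf L₁ v s ↔ IsCopyOf L₂ v s :=
  exists_congr fun e => and_congr_right fun _ => h e v

theorem copyArrow_iff_of_qftp_eq_iff {α β : Type*}
    (hα : ∀ a b : α → M, qftp L₁ M a = qftp L₁ M b ↔ qftp L₂ M a = qftp L₂ M b)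
    (hβ : ∀ a b : β → M, qftp L₁ M a = qftp L₁ M b ↔ qftp L₂ M a = qftp L₂ M b)
    (a : α → M) (b : β → M) (C : Set M) : CopyArrow L₁ a b C ↔ CopyArrow L₂ a b C := by
  simp only [CopyArrow, isCopyOf_iff_of_qftp_eq_iff hα, isCopyOf_iff_of_qftp_eq_iff hβ]

end

/-- If two structures on the same domain have the same equality relation on quantifier-free
types of same-length tuples, then one has the Embedding Ramsey Property iff the other does. -/
theorem structERP_iff_of_qftp_eq_iff (L₁ L₂ : Language) (M : Type*)
    [L₁.Structure M] [L₂.Structure M]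
    (h : ∀ (n : ℕ) (a b : Fin n → M), qftp L₁ M a = qftp L₁ M b ↔ qftp L₂ M a = qftp L₂ M b) :
    StructERP L₁ M ↔ StructERP L₂ M := by
  simp only [StructERP, copyArrow_iff_of_qftp_eq_iff (h _) (h _)]
end

section
/- Let C be a class of finitely generated L-structures with the finitary Embedding Ramsey Property and the embedding local finiteness property (for all B ∈ C and finite A ⊆ B, the set of copies of A in B is finite). Then C has the infinitary Embedding Ramsey Property: for any M ∈ C, any finitely generated substructure B ⊆ M and finite A ⊆ B, there is N ∈ C and a finitely generated C' ⊆ N with C' → (B)^A_2. -/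
/-!
Let `b` enumerate a finite set that generates `B` and contains every copy of `A` in `M` (finite by
embedding local finiteness), and apply the finitary property to `A ⊆ range b`, obtaining a finite
`C ⊆ N`. Writing the elements of `B` as terms in `b`, every copy `e` of `b` in `C` extends, by
evaluating the same terms at `e`, to a copy of `B` in the substructure generated by `C`. Equal
quantifier-free types transfer term equations, so a copy of `A` in this copy of `B` pulls back to a
copy of `A` in `B`, which lies in `range b`; hence the copy of `A` already lies in `range e`, where
the colouring is monochromatic.
-/

open FirstOrder Language CategoryTheory

/-- The class `K` has the finitary Embedding Ramsey Property. -/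
def ClassFERP (L : Language) (K : Set (Bundled L.Structure)) : Prop :=
  ∀ M ∈ K, ∀ (n m : ℕ) (a : Fin n → ↥M) (b : Fin m → ↥M), Set.range a ⊆ Set.range b →
    ∃ N ∈ K, ∃ C : Set ↥N, C.Finite ∧ CopyArrow L a b C

/-- The class `K` has the embedding local finiteness property: for every `B ∈ K` and finite
subset `A` of `B`, the set of copies of `A` in `B` is finite. -/
def ClassELF (L : Language) (K : Set (Bundled L.Structure)) : Prop :=
  ∀ B ∈ K, ∀ (n : ℕ) (a : Fin n → ↥B), {s : Set ↥B | IsCopyOf L a s}.Finite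

/-- The infinitary Embedding Ramsey Property (with finite pattern `A`): for `M ∈ K`,
`B` a finitely generated substructure of `M` and `A ⊆ B` finite, there are `N ∈ K` and a
finitely generated substructure `C ⊆ N` with `C → (B)^A_2`. -/
def ClassInfERPfin (L : Language) (K : Set (Bundled L.Structure)) : Prop :=
  ∀ M ∈ K, ∀ B : L.Substructure ↥M, B.FG →
    ∀ (n : ℕ) (a : Fin n → ↥M), Set.range a ⊆ (B : Set ↥M) →
      ∃ N ∈ K, ∃ C : L.Substructure ↥N, C.FG ∧
        CopyArrow L a (Subtype.val : ↥B → ↥M) (C : Set ↥N)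

open Set

theorem FirstOrder.Language.BoundedFormula.IsQF.subst {L : Language} {α β : Type*} {n : ℕ}
    {φ : L.BoundedFormula α n} (h : φ.IsQF) (f : α → L.Term β) : (φ.subst f).IsQF := by
  induction h with
  | falsum => exact IsQF.falsum
  | of_isAtomic h =>
    cases h with
    | equal t₁ t₂ => exact (IsAtomic.equal _ _).isQF
    | rel R ts => exact (IsAtomic.rel _ _).isQF
  | imp _ _ ih₁ ih₂ => exact ih₁.imp ih₂

theorem FirstOrder.Language.Substructure.exists_term_realize_eq_of_mem_closure_range
    {L : Language} {M : Type*} [L.Structure M] {α : Type*} {v : α → M} {x : M}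
    (hx : x ∈ closure L (range v)) : ∃ t : L.Term α, t.realize v = x := by
  obtain ⟨t, rfl⟩ := mem_closure_iff_exists_term.1 hx
  refine ⟨t.relabel (rangeSplitting v), ?_⟩
  rw [Term.realize_relabel]
  congr 1
  funext y
  exact apply_rangeSplitting v y

section QFType

variable {L : Language} {M N : Type*} [L.Structure M] [L.Structure N] {α : Type*}
  {e : α → N} {v : α → M}

theorem realize_iff_of_qftp_eq (h : qftp L N e = qftp L M v) {φ : L.Formula α} (hφ : φ.IsQF) :
    φ.Realize e ↔ φ.Realize v := by
  simpa only [qftp, mem_ofPred_eq, hφ, true_and] using Set.ext_iff.1 h φ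

theorem qftp_realize_terms_eq (h : qftp L N e = qftp L M v) {β : Type*} (f : β → L.Term α) :
    qftp L N (fun x => (f x).realize e) = qftp L M (fun x => (f x).realize v) := by
  ext φ
  refine and_congr_right fun hφ => ?_
  simpa only [Formula.Realize, BoundedFormula.realize_subst] using
    realize_iff_of_qftp_eq h (hφ.subst f)

theorem realize_mem_range_of_qftp_eq (h : qftp L N e = qftp L M v) (t : L.Term α)
    (ht : t.realize v ∈ range v) : t.realize e ∈ range e := by
  obtain ⟨j, hj⟩ := ht
  refine ⟨j, ?_⟩
  have hQF : (Term.equal t (Term.var j) : L.Formula α).IsQF :=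
    (BoundedFormula.IsAtomic.equal _ _).isQF
  have hv : (Term.equal t (Term.var j) : L.Formula α).Realize v := by
    simpa only [Formula.realize_equal, Term.realize_var] using hj.symm
  simpa only [Formula.realize_equal, Term.realize_var, eq_comm] using
    (realize_iff_of_qftp_eq h hQF).2 hv

theorem IsCopyOf.subset_range_of_qftp_eq {γ β : Type*} {a : γ → M}
    (h : qftp L N e = qftp L M v) (hv : ∀ s, IsCopyOf L a s → s ⊆ range v)
    {f : β → L.Term α} {t : Set N} (ht : t ⊆ range fun x => (f x).realize e)
    (hta : IsCopyOf L a t) : t ⊆ range e := by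
  obtain ⟨g', rfl, hg'⟩ := hta
  choose g hg using fun i => ht ⟨i, rfl⟩
  have hpull : IsCopyOf L a (range fun i => (f (g i)).realize v) := by
    refine ⟨_, rfl, ?_⟩
    calc qftp L M (fun i => (f (g i)).realize v)
        = qftp L N (fun i => (f (g i)).realize e) := (qftp_realize_terms_eq h (f ∘ g)).symm
      _ = qftp L N g' := congrArg (qftp L N) (funext hg)
      _ = qftp L M a := hg'
  rintro _ ⟨i, rfl⟩
  rw [← hg i]
  exact realize_mem_range_of_qftp_eq h _ (hv _ hpull ⟨i, rfl⟩)

end QFType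

theorem CopyArrow.closure_of_le_closure_range {L : Language} {M N : Type*} [L.Structure M]
    [L.Structure N] {α γ : Type*} {a : α → M} {b : γ → M} {B : L.Substructure M} {C : Set N}
    (hcop : ∀ s, IsCopyOf L a s → s ⊆ range b) (hB : B ≤ Substructure.closure L (range b))
    (h : CopyArrow L a b C) :
    CopyArrow L a (Subtype.val : B → M) (Substructure.closure L C : Set N) := by
  choose f hf using fun x : B => Substructure.exists_term_realize_eq_of_mem_closure_range (hB x.2)
  intro χ
  obtain ⟨_, hsC, ⟨e, rfl, he⟩, hmono⟩ := h χ
  refine ⟨range fun x => (f x).realize e, ?_, ⟨_, rfl, ?_⟩, ?_⟩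
  · rintro _ ⟨x, rfl⟩
    exact Term.realize_mem _ _ fun i => Substructure.subset_closure (hsC ⟨i, rfl⟩)
  · rw [qftp_realize_terms_eq he f]
    exact congrArg (qftp L M) (funext hf)
  · intro t u ht hu hta hua
    exact hmono t u (hta.subset_range_of_qftp_eq he hcop ht)
      (hua.subset_range_of_qftp_eq he hcop hu) hta hua

theorem infERP_of_fERP_of_elf_general (L : Language) (K : Set (Bundled L.Structure))
    (hferp : ClassFERP L K) (helf : ClassELF L K) :
    ClassInfERPfin L K := by
  intro M hM B ⟨S, hS⟩ n a _
  have hU : (⋃₀ {s : Set M | IsCopyOf L a s}).Finite :=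
    (helf M hM n a).sUnion fun s ⟨e, he, _⟩ => he ▸ finite_range e
  obtain ⟨m, b, hb⟩ := (S.finite_toSet.union hU).fin_embedding
  have hcop : ∀ s, IsCopyOf L a s → s ⊆ range b := fun s hs =>
    hb ▸ (subset_sUnion_of_mem (show s ∈ {s | IsCopyOf L a s} from hs)).trans subset_union_right
  obtain ⟨N, hN, C, hCfin, hC⟩ := hferp M hM n m a b (hcop _ ⟨a, rfl, rfl⟩)
  refine ⟨N, hN, Substructure.closure L C, Substructure.fg_closure hCfin,
    hC.closure_of_le_closure_range hcop ?_⟩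
  rw [← hS, hb]
  exact Substructure.closure_mono subset_union_left

/-- A class of finitely generated structures with the finitary Embedding Ramsey Property and
the embedding local finiteness property has the infinitary Embedding Ramsey Property. -/
theorem infERP_of_fERP_of_elf (L : Language) (K : Set (Bundled L.Structure))
    (hfg : ∀ M ∈ K, Structure.FG L ↥M)
    (hferp : ClassFERP L K) (helf : ClassELF L K) :
    ClassInfERPfin L K :=
  infERP_of_fERP_of_elf_general L K hferp helf
end

section
/- Let C be a class of L-structures with the infinitary Embedding Ramsey Property restricted to finite A: for any M ∈ C, finitely generated substructure B ⊆ M, and finite subset A ⊆ B, there is N ∈ C and a finitely generated C' ⊆ N such that C' → (B)^A_2. Then C has the full infinitary Embedding Ramsey Property, where A is also allowed to be an arbitrary finitely generated substructure. -/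
open FirstOrder Language CategoryTheory

/-- The full infinitary Embedding Ramsey Property: the pattern `A` may be any finitely
generated substructure. -/
def ClassInfERP (L : Language) (K : Set (Bundled L.Structure)) : Prop :=
  ∀ M ∈ K, ∀ A B : L.Substructure ↥M, A.FG → B.FG → A ≤ B →
    ∃ N ∈ K, ∃ C : L.Substructure ↥N, C.FG ∧
      CopyArrow L (Subtype.val : ↥A → ↥M) (Subtype.val : ↥B → ↥M) (C : Set ↥N)

/-!
Pick a finite tuple `a` generating `A` and apply the finite-pattern property to `a` and `B`,
for the colouring that gives a copy `t` of `a` the colour of the substructure it generates.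
Tuples with the same quantifier-free type satisfy the same term equations, so every copy of `A`
is the substructure generated by a copy of `a` lying inside it; hence a copy of `B` on which
copies of `a` are monochromatic is also monochromatic on copies of `A`.
-/

open Set

namespace FirstOrder.Language

variable {L : Language} {M N : Type*} [L.Structure M] [L.Structure N] {α β : Type*}

theorem Substructure.coe_closure_range_eq_range_term_realize (f : β → M) :
    (Substructure.closure L (range f) : Set M) = range fun t : L.Term β => t.realize f := by
  apply Subset.antisymm
  · let S : L.Substructure M := ⟨range fun t : L.Term β => t.realize f, fun {_} F x hx => by
      choose t ht using hx
      exact ⟨Term.func F t, by simp only [Term.realize, ht]⟩⟩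
    exact (Substructure.closure_le (S := S)).2 (by rintro _ ⟨i, rfl⟩; exact ⟨Term.var i, rfl⟩)
  · rintro _ ⟨t, rfl⟩
    exact t.realize_mem _ fun i => Substructure.subset_closure ⟨i, rfl⟩

variable {v : α → M} {e : α → N}

theorem Formula.realize_iff_of_qftp_eq (h : qftp L N e = qftp L M v) {φ : L.Formula α}
    (hφ : φ.IsQF) : φ.Realize e ↔ φ.Realize v :=
  Iff.of_eq (by simpa only [qftp, mem_ofPred_eq, hφ, true_and] using congrArg (φ ∈ ·) h)

theorem Term.realize_eq_iff_of_qftp_eq (h : qftp L N e = qftp L M v) (t₁ t₂ : L.Term α) :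
    t₁.realize e = t₂.realize e ↔ t₁.realize v = t₂.realize v := by
  simpa only [Formula.realize_equal] using
    Formula.realize_iff_of_qftp_eq (φ := t₁.equal t₂) h (BoundedFormula.IsAtomic.equal _ _).isQF

end FirstOrder.Language

section qftp

variable {L : Language} {M N : Type*} [L.Structure M] [L.Structure N] {α β : Type*}
  {v : α → M} {e : α → N}

theorem qftp_comp_eq_of_qftp_eq (h : qftp L N e = qftp L M v) (g : β → α) :
    qftp L N (e ∘ g) = qftp L M (v ∘ g) := by
  ext φ
  simp only [qftp, mem_ofPred_eq, ← Formula.realize_relabel]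
  exact and_congr_right fun hφ => Formula.realize_iff_of_qftp_eq h (hφ.relabel _)

theorem range_eq_closure_of_qftp_eq (h : qftp L N e = qftp L M v) (g : β → α)
    (hv : range v = Substructure.closure L (range (v ∘ g))) :
    range e = Substructure.closure L (range (e ∘ g)) := by
  rw [Substructure.coe_closure_range_eq_range_term_realize] at hv ⊢
  apply Subset.antisymm
  · rintro _ ⟨c, rfl⟩
    obtain ⟨t, ht⟩ : v c ∈ range fun t : L.Term β => t.realize (v ∘ g) := hv ▸ mem_range_self c
    refine ⟨t, ?_⟩
    simpa only [Term.realize_relabel, Term.realize_var] using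
      (Term.realize_eq_iff_of_qftp_eq h (t.relabel g) (Term.var c)).2
        (by simpa only [Term.realize_relabel, Term.realize_var] using ht)
  · rintro _ ⟨t, rfl⟩
    obtain ⟨c, hc⟩ : t.realize (v ∘ g) ∈ range v := hv ▸ mem_range_self t
    refine ⟨c, ?_⟩
    simpa only [Term.realize_relabel, Term.realize_var] using
      (Term.realize_eq_iff_of_qftp_eq h (Term.var c) (t.relabel g)).2
        (by simpa only [Term.realize_relabel, Term.realize_var] using hc)

theorem IsCopyOf.exists_generating_copy (g : β → α)
    (hv : range v = Substructure.closure L (range (v ∘ g))) {t : Set N} (ht : IsCopyOf L v t) :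
    ∃ t₀ : Set N, IsCopyOf L (v ∘ g) t₀ ∧ t₀ ⊆ t ∧ t = Substructure.closure L t₀ := by
  obtain ⟨e, rfl, h⟩ := ht
  exact ⟨range (e ∘ g), ⟨e ∘ g, rfl, qftp_comp_eq_of_qftp_eq h g⟩, range_comp_subset_range g e,
    range_eq_closure_of_qftp_eq h g hv⟩

end qftp

/-- If a class has the infinitary Embedding Ramsey Property restricted to finite patterns
`A`, then it has the full infinitary Embedding Ramsey Property, where the pattern is allowed
to be an arbitrary finitely generated substructure. -/
theorem infERP_of_infERPfin (L : Language) (K : Set (Bundled L.Structure))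
    (h : ClassInfERPfin L K) : ClassInfERP L K := by
  intro M hM A B hA hB hAB
  obtain ⟨n, a, rfl⟩ := Substructure.fg_iff_exists_fin_generating_family.1 hA
  have haB : range a ⊆ B := Substructure.subset_closure.trans hAB
  let a' : Fin n → Substructure.closure L (range a) :=
    fun i => ⟨a i, Substructure.subset_closure ⟨i, rfl⟩⟩
  have hgen : range (Subtype.val : Substructure.closure L (range a) → M) =
      Substructure.closure L (range (Subtype.val ∘ a')) := Subtype.range_coe
  obtain ⟨N, hN, C, hC, harrow⟩ := h M hM B hB n a haB
  refine ⟨N, hN, C, hC, fun χ => ?_⟩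
  obtain ⟨s, hsC, hs, hmono⟩ := harrow fun t => χ (Substructure.closure L t)
  refine ⟨s, hsC, hs, fun t u hts hus ht hu => ?_⟩
  obtain ⟨t₀, ht₀, ht₀t, rfl⟩ := ht.exists_generating_copy a' hgen
  obtain ⟨u₀, hu₀, hu₀u, rfl⟩ := hu.exists_generating_copy a' hgen
  exact hmono t₀ u₀ (ht₀t.trans hts) (hu₀u.trans hus) ht₀ hu₀
end
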